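/- arXiv:cs/9911013 — 3 statements merged into one kernel-verified Lean document; each statement's English description precedes it below -/
import Mathlib

section
/- In the PushPush model, if four movable blocks occupy the cells of a 2×2 square in the grid, then no sequence of robot moves and pushes can ever move any of those four blocks: the 2×2 cluster is permanently immobile. -/
/-- Cells of the integer lattice ℤ². -/
abbrev Cell := ℤ × ℤ

/-- The four orthogonal unit directions. -/
def IsDir (d : Cell) : Prop := d = (1, 0) ∨ d = (-1, 0) ∨ d = (0, 1) ∨ d = (0, -1)

/-- A PushPush configuration: a finite set of blocks and a robot position. -/
structure Config where
  blocks : Finset Cell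
  robot : Cell

/-- One step of PushPush: either the robot moves to an adjacent empty cell, or it
pushes the adjacent block, which slides the maximal extent of its free range
(stopping just before the first occupied cell in that direction). -/
inductive Step : Config → Config → Prop
  | move (B : Finset Cell) (r d : Cell) (hd : IsDir d) (hr : r ∉ B)
      (h : r + d ∉ B) : Step ⟨B, r⟩ ⟨B, r + d⟩
  | push (B : Finset Cell) (r d : Cell) (hd : IsDir d) (hr : r ∉ B) (k : ℤ)
      (hk : 1 ≤ k) (hb : r + d ∈ B)
      (hfree : ∀ i : ℤ, 1 ≤ i → i ≤ k → r + d + i • d ∉ B)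
      (hstop : r + d + (k + 1) • d ∈ B) :
      Step ⟨B, r⟩ ⟨insert (r + d + k • d) (B.erase (r + d)), r + d⟩

/-- Reachability by a finite sequence of moves and pushes. -/
def Reachable : Config → Config → Prop := Relation.ReflTransGen Step

/-- A 2×2 cluster of blocks is permanently immobile: in every reachable
configuration, all four cells of the cluster are still occupied by blocks. -/
theorem twoByTwo_cluster_immobile (B : Finset Cell) (r p : Cell)
    (h1 : p ∈ B) (h2 : p + (1, 0) ∈ B) (h3 : p + (0, 1) ∈ B) (h4 : p + (1, 1) ∈ B)
    (hr : r ∉ B) :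
    ∀ c : Config, Reachable ⟨B, r⟩ c →
      p ∈ c.blocks ∧ p + (1, 0) ∈ c.blocks ∧ p + (0, 1) ∈ c.blocks ∧
        p + (1, 1) ∈ c.blocks := by
  intro c hc
  induction hc with
  | refl => exact ⟨h1, h2, h3, h4⟩
  | tail _ hstep ih =>
    obtain ⟨i1, i2, i3, i4⟩ := ih
    cases hstep with
    | move B' r' d hd hr' h => exact ⟨i1, i2, i3, i4⟩
    | push B' r' d hd hr' k hk hb hfree hstop =>
      simp only at i1 i2 i3 i4 ⊢
      have hf := hfree 1 le_rfl hk
      rw [one_smul] at hf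
      have key : ∀ c : Cell, c ∈ B' → c + d ∈ B' → r' + d ≠ c := by
        intro c hc hcd h
        exact hf (h ▸ hcd)
      have key2 : ∀ c : Cell, c - d ∈ B' → r' + d ≠ c := by
        intro c hc h
        apply hr'
        have : r' = c - d := by
          rw [Prod.ext_iff] at h ⊢
          simp only [Prod.fst_add, Prod.snd_add, Prod.fst_sub, Prod.snd_sub] at h ⊢
          omega
        rwa [this]
      have k1 : r' + d ≠ p := by
        rcases hd with rfl | rfl | rfl | rfl
        · exact key p i1 i2
        · exact key2 p (by rw [show p - ((-1:ℤ),(0:ℤ)) = p + (1,0) from by simp [Prod.ext_iff]]; exact i2)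
        · exact key p i1 i3
        · exact key2 p (by rw [show p - ((0:ℤ),(-1:ℤ)) = p + (0,1) from by simp [Prod.ext_iff]]; exact i3)
      have k2 : r' + d ≠ p + (1, 0) := by
        rcases hd with rfl | rfl | rfl | rfl
        · exact key2 _ (by rw [show p + ((1:ℤ),(0:ℤ)) - (1,0) = p from by simp [Prod.ext_iff]]; exact i1)
        · exact key _ i2 (by rw [show p + ((1:ℤ),(0:ℤ)) + (-1,0) = p from by simp [Prod.ext_iff]]; exact i1)
        · exact key _ i2 (by rw [show p + ((1:ℤ),(0:ℤ)) + (0,1) = p + (1,1) from by simp [Prod.ext_iff]]; exact i4)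
        · exact key2 _ (by rw [show p + ((1:ℤ),(0:ℤ)) - (0,-1) = p + (1,1) from by simp [Prod.ext_iff]]; exact i4)
      have k3 : r' + d ≠ p + (0, 1) := by
        rcases hd with rfl | rfl | rfl | rfl
        · exact key _ i3 (by rw [show p + ((0:ℤ),(1:ℤ)) + (1,0) = p + (1,1) from by simp [Prod.ext_iff]]; exact i4)
        · exact key2 _ (by rw [show p + ((0:ℤ),(1:ℤ)) - (-1,0) = p + (1,1) from by simp [Prod.ext_iff]]; exact i4)
        · exact key2 _ (by rw [show p + ((0:ℤ),(1:ℤ)) - (0,1) = p from by simp [Prod.ext_iff]]; exact i1)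
        · exact key _ i3 (by rw [show p + ((0:ℤ),(1:ℤ)) + (0,-1) = p from by simp [Prod.ext_iff]]; exact i1)
      have k4 : r' + d ≠ p + (1, 1) := by
        rcases hd with rfl | rfl | rfl | rfl
        · exact key2 _ (by rw [show p + ((1:ℤ),(1:ℤ)) - (1,0) = p + (0,1) from by simp [Prod.ext_iff]]; exact i3)
        · exact key _ i4 (by rw [show p + ((1:ℤ),(1:ℤ)) + (-1,0) = p + (0,1) from by simp [Prod.ext_iff]]; exact i3)
        · exact key2 _ (by rw [show p + ((1:ℤ),(1:ℤ)) - (0,1) = p + (1,0) from by simp [Prod.ext_iff]]; exact i2)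
        · exact key _ i4 (by rw [show p + ((1:ℤ),(1:ℤ)) + (0,-1) = p + (1,0) from by simp [Prod.ext_iff]]; exact i2)
      exact ⟨Finset.mem_insert_of_mem (Finset.mem_erase.mpr ⟨k1.symm, i1⟩),
        Finset.mem_insert_of_mem (Finset.mem_erase.mpr ⟨k2.symm, i2⟩),
        Finset.mem_insert_of_mem (Finset.mem_erase.mpr ⟨k3.symm, i3⟩),
        Finset.mem_insert_of_mem (Finset.mem_erase.mpr ⟨k4.symm, i4⟩)⟩
end

section
/- In the abstract gadget-graph model of PushPush, the One-Way gadget permits traversal from terminal x to terminal y but not from y to x: every sequence of legal transitions starting at y with the gadget in its initial state never reaches x, while there exists a sequence starting at x that reaches y. -/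
/-- A state of a corridor gadget: positions of the movable blocks and of the robot. -/
structure St where
  B : Finset Cell
  r : Cell

/-- PushPush steps inside a corridor region `F` (all cells outside `F` are walls):
the robot moves to an adjacent empty corridor cell, or pushes an adjacent single
block, which slides maximally until hitting a wall (dead end of the corridor) or
another block. -/
inductive GStep (F : Finset Cell) : St → St → Prop
  | move (B : Finset Cell) (r d : Cell) (hd : IsDir d) (hrF : r ∈ F) (hr : r ∉ B)
      (hF : r + d ∈ F) (h : r + d ∉ B) : GStep F ⟨B, r⟩ ⟨B, r + d⟩
  | push (B : Finset Cell) (r d : Cell) (hd : IsDir d) (hrF : r ∈ F) (hr : r ∉ B)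
      (k : ℤ) (hk : 1 ≤ k) (hb : r + d ∈ B)
      (hfree : ∀ i : ℤ, 1 ≤ i → i ≤ k → r + d + i • d ∈ F ∧ r + d + i • d ∉ B)
      (hstop : r + d + (k + 1) • d ∉ F ∨ r + d + (k + 1) • d ∈ B) :
      GStep F ⟨B, r⟩ ⟨insert (r + d + k • d) (B.erase (r + d)), r + d⟩

/-- Reachability by finitely many moves and pushes inside region `F`. -/
def Reach (F : Finset Cell) : St → St → Prop := Relation.ReflTransGen (GStep F)

/-- The corridor cells of the One-Way gadget: a through corridor from
`x = (0,0)` rightwards to the T-junction `(2,0)`, a dead-end storage corridor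
`(3,0), (4,0)` continuing rightwards, and the exit corridor going down to
`y = (2,-2)`. -/
def oneWayF : Finset Cell := {(0, 0), (1, 0), (2, 0), (3, 0), (4, 0), (2, -1), (2, -2)}

/-- The single movable block initially sits at the junction `(2,0)`, so that from
`y`'s side there is no empty corridor behind it in the pushing direction. -/
def oneWayB : Finset Cell := {(2, 0)}

lemma move' {F B r d r'} (hd : IsDir d) (hrF : r ∈ F) (hr : r ∉ B)
    (hF : r + d ∈ F) (h : r + d ∉ B) (he : r' = r + d) :
    GStep F ⟨B, r⟩ ⟨B, r'⟩ := he ▸ GStep.move B r d hd hrF hr hF h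

/-- One-Way gadget: the robot may travel from `x = (0,0)` to `y = (2,-2)`
(pushing the junction block into the storage corridor), but starting from `y`
with the gadget in its initial state it can never reach `x`. -/
theorem oneWay_gadget :
    (∃ s : St, Reach oneWayF ⟨oneWayB, (0, 0)⟩ s ∧ s.r = (2, -2)) ∧
      (∀ s : St, Reach oneWayF ⟨oneWayB, (2, -2)⟩ s → s.r ≠ (0, 0)) := by
  constructor
  · -- forward traversal
    refine ⟨⟨{((4:ℤ), (0:ℤ))}, (2, -2)⟩, ?_, rfl⟩
    have s1 : GStep oneWayF ⟨oneWayB, ((0:ℤ),(0:ℤ))⟩ ⟨oneWayB, (1, 0)⟩ :=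
      move' (Or.inl rfl) (by decide) (by decide) (by decide) (by decide) (by decide)
    have s2 : GStep oneWayF ⟨oneWayB, ((1:ℤ),(0:ℤ))⟩ ⟨{((4:ℤ),(0:ℤ))}, (2, 0)⟩ := by
      have := GStep.push (F := oneWayF) oneWayB (1,0) (1,0) (Or.inl rfl)
        (by decide) (by decide) 2 (by norm_num) (by decide)
        (by intro i h1 h2
            interval_cases i <;> constructor <;> decide)
        (Or.inl (by decide))
      convert this using 2 <;> decide
    have s3 : GStep oneWayF ⟨{((4:ℤ),(0:ℤ))}, ((2:ℤ),(0:ℤ))⟩ ⟨{((4:ℤ),(0:ℤ))}, (2, -1)⟩ :=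
      move' (Or.inr (Or.inr (Or.inr rfl))) (by decide) (by decide) (by decide) (by decide) (by decide)
    have s4 : GStep oneWayF ⟨{((4:ℤ),(0:ℤ))}, ((2:ℤ),(-1:ℤ))⟩ ⟨{((4:ℤ),(0:ℤ))}, (2, -2)⟩ :=
      move' (Or.inr (Or.inr (Or.inr rfl))) (by decide) (by decide) (by decide) (by decide) (by decide)
    exact Relation.ReflTransGen.head s1 (Relation.ReflTransGen.head s2
      (Relation.ReflTransGen.head s3 (Relation.ReflTransGen.single s4)))
  · -- backward impossibility via invariant
    have inv : ∀ s : St, Reach oneWayF ⟨oneWayB, (2, -2)⟩ s →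
        s.B = oneWayB ∧ (s.r = (2, -1) ∨ s.r = (2, -2)) := by
      intro s h
      induction h with
      | refl => exact ⟨rfl, Or.inr rfl⟩
      | tail _ step ih =>
        cases step with
        | move B r d hd hrF hr hF h =>
          obtain ⟨hB, hrr⟩ := ih
          subst hB
          refine ⟨rfl, ?_⟩
          rcases hd with rfl | rfl | rfl | rfl <;> rcases hrr with rfl | rfl <;>
            first
              | (exact absurd hF (by decide))
              | (exact absurd (by decide) h)
              | (left; decide)
              | (right; decide)
        | push B r d hd hrF hr k hk hb hfree hstop =>
          obtain ⟨hB, hrr⟩ := ih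
          subst hB
          exfalso
          rcases hd with rfl | rfl | rfl | rfl <;> rcases hrr with rfl | rfl <;>
            first
              | (exact absurd hb (by decide))
              | (exact absurd (hfree 1 le_rfl hk).1 (by decide))
    intro s h hne
    rcases (inv s h).2 with h2 | h2 <;> rw [hne] at h2 <;> exact absurd h2 (by decide)
end

section
/- In 3D PushPush, two width-1 corridors can cross without leakage: in the crossover gadget where one corridor passes one level above the other, the set of cells reachable by the robot entering from either end of one corridor is exactly that corridor, and no block of the other corridor can ever be pushed. -/
/-- Cells of the integer lattice ℤ³. -/
abbrev Cell3 := ℤ × ℤ × ℤ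

/-- The six orthogonal unit directions in 3D. -/
def IsDir3 (d : Cell3) : Prop :=
  d = (1, 0, 0) ∨ d = (-1, 0, 0) ∨ d = (0, 1, 0) ∨ d = (0, -1, 0) ∨
    d = (0, 0, 1) ∨ d = (0, 0, -1)

/-- A state: positions of the movable blocks and of the robot. -/
structure St3 where
  B : Finset Cell3
  r : Cell3

/-- 3D PushPush steps inside a corridor region `F` (all cells outside `F` are
permanently frozen wall clusters): robot moves to adjacent empty corridor cells
and maximal-slide pushes of single blocks. -/
inductive GStep3 (F : Finset Cell3) : St3 → St3 → Prop
  | move (B : Finset Cell3) (r d : Cell3) (hd : IsDir3 d) (hrF : r ∈ F) (hr : r ∉ B)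
      (hF : r + d ∈ F) (h : r + d ∉ B) : GStep3 F ⟨B, r⟩ ⟨B, r + d⟩
  | push (B : Finset Cell3) (r d : Cell3) (hd : IsDir3 d) (hrF : r ∈ F) (hr : r ∉ B)
      (k : ℤ) (hk : 1 ≤ k) (hb : r + d ∈ B)
      (hfree : ∀ i : ℤ, 1 ≤ i → i ≤ k → r + d + i • d ∈ F ∧ r + d + i • d ∉ B)
      (hstop : r + d + (k + 1) • d ∉ F ∨ r + d + (k + 1) • d ∈ B) :
      GStep3 F ⟨B, r⟩ ⟨insert (r + d + k • d) (B.erase (r + d)), r + d⟩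

/-- Corridor `P` runs along the x-axis at height z = 0. -/
def corrP : Finset Cell3 :=
  {(-3, 0, 0), (-2, 0, 0), (-1, 0, 0), (0, 0, 0), (1, 0, 0), (2, 0, 0), (3, 0, 0)}

/-- Corridor `Q` runs along the y-axis two levels above `P`'s midpoint, joined to
its own level by vertical corridor segments away from `P`. -/
def corrQ : Finset Cell3 :=
  {(0, -3, 0), (0, -2, 0), (0, -2, 1), (0, -2, 2), (0, -1, 2), (0, 0, 2),
    (0, 1, 2), (0, 2, 2), (0, 2, 1), (0, 2, 0), (0, 3, 0)}

/- ---------- auxiliary material ---------- -/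

def dirs3 : Finset Cell3 := {(1,0,0),(-1,0,0),(0,1,0),(0,-1,0),(0,0,1),(0,0,-1)}

lemma isDir3_mem {d : Cell3} (h : IsDir3 d) : d ∈ dirs3 := by
  rcases h with h|h|h|h|h|h <;> subst h <;> decide

lemma PQ_disj : ∀ p ∈ corrP, p ∉ corrQ := by decide
lemma QP_disj : ∀ p ∈ corrQ, p ∉ corrP := by decide
lemma adjPQ : ∀ r ∈ corrP, ∀ d ∈ dirs3, r + d ∉ corrQ := by decide
lemma adjQP : ∀ r ∈ corrQ, ∀ d ∈ dirs3, r + d ∉ corrP := by decide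

/-- single move inside P, blocks in Q -/
lemma mvP {B : Finset Cell3} (hB : B ⊆ corrQ) (r p d : Cell3) (hd : IsDir3 d)
    (hr : r ∈ corrP) (hp : p ∈ corrP) (hpd : r + d = p) :
    GStep3 (corrP ∪ corrQ) ⟨B, r⟩ ⟨B, p⟩ := by
  subst hpd
  exact .move B r d hd (Finset.mem_union_left _ hr)
    (fun h => PQ_disj r hr (hB h))
    (Finset.mem_union_left _ hp)
    (fun h => PQ_disj _ hp (hB h))

/-- single move inside Q, blocks in P -/
lemma mvQ {B : Finset Cell3} (hB : B ⊆ corrP) (r p d : Cell3) (hd : IsDir3 d)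
    (hr : r ∈ corrQ) (hp : p ∈ corrQ) (hpd : r + d = p) :
    GStep3 (corrP ∪ corrQ) ⟨B, r⟩ ⟨B, p⟩ := by
  subst hpd
  exact .move B r d hd (Finset.mem_union_right _ hr)
    (fun h => QP_disj r hr (hB h))
    (Finset.mem_union_right _ hp)
    (fun h => QP_disj _ hp (hB h))

lemma stepInvP {B₀ : Finset Cell3} (hB : B₀ ⊆ corrQ) {s t : St3}
    (hst : GStep3 (corrP ∪ corrQ) s t) (hr : s.r ∈ corrP) (hsB : s.B = B₀) :
    t.r ∈ corrP ∧ t.B = B₀ := by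
  cases hst with
  | move B r d hd hrF hrB hF h =>
      refine ⟨?_, hsB⟩
      rcases Finset.mem_union.mp hF with h' | h'
      · exact h'
      · exact absurd h' (adjPQ r hr d (isDir3_mem hd))
  | push B r d hd hrF hrB k hk hb hfree hstop =>
      exact absurd (hB (hsB ▸ hb)) (adjPQ r hr d (isDir3_mem hd))

lemma stepInvQ {B₀ : Finset Cell3} (hB : B₀ ⊆ corrP) {s t : St3}
    (hst : GStep3 (corrP ∪ corrQ) s t) (hr : s.r ∈ corrQ) (hsB : s.B = B₀) :
    t.r ∈ corrQ ∧ t.B = B₀ := by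
  cases hst with
  | move B r d hd hrF hrB hF h =>
      refine ⟨?_, hsB⟩
      rcases Finset.mem_union.mp hF with h' | h'
      · exact absurd h' (adjQP r hr d (isDir3_mem hd))
      · exact h'
  | push B r d hd hrF hrB k hk hb hfree hstop =>
      exact absurd (hB (hsB ▸ hb)) (adjQP r hr d (isDir3_mem hd))

/-- reach every P cell from the left entrance -/
lemma reachPL {B : Finset Cell3} (hB : B ⊆ corrQ) :
    ∀ p ∈ corrP,
      Relation.ReflTransGen (GStep3 (corrP ∪ corrQ)) ⟨B, (-3,0,0)⟩ ⟨B, p⟩ := by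
  have t0 : Relation.ReflTransGen (GStep3 (corrP ∪ corrQ)) ⟨B, (-3,0,0)⟩ ⟨B, (-3,0,0)⟩ :=
    .refl
  have t1 := t0.tail (mvP hB (-3,0,0) (-2,0,0) (1,0,0) (Or.inl rfl) (by decide) (by decide) (by decide))
  have t2 := t1.tail (mvP hB (-2,0,0) (-1,0,0) (1,0,0) (Or.inl rfl) (by decide) (by decide) (by decide))
  have t3 := t2.tail (mvP hB (-1,0,0) (0,0,0) (1,0,0) (Or.inl rfl) (by decide) (by decide) (by decide))
  have t4 := t3.tail (mvP hB (0,0,0) (1,0,0) (1,0,0) (Or.inl rfl) (by decide) (by decide) (by decide))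
  have t5 := t4.tail (mvP hB (1,0,0) (2,0,0) (1,0,0) (Or.inl rfl) (by decide) (by decide) (by decide))
  have t6 := t5.tail (mvP hB (2,0,0) (3,0,0) (1,0,0) (Or.inl rfl) (by decide) (by decide) (by decide))
  intro p hp
  simp only [corrP, Finset.mem_insert, Finset.mem_singleton] at hp
  rcases hp with h|h|h|h|h|h|h <;> subst h <;> assumption

/-- go from the right entrance of P to the left one -/
lemma crossPR {B : Finset Cell3} (hB : B ⊆ corrQ) :
    Relation.ReflTransGen (GStep3 (corrP ∪ corrQ)) ⟨B, (3,0,0)⟩ ⟨B, (-3,0,0)⟩ := by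
  have t0 : Relation.ReflTransGen (GStep3 (corrP ∪ corrQ)) ⟨B, (3,0,0)⟩ ⟨B, (3,0,0)⟩ :=
    .refl
  have t1 := t0.tail (mvP hB (3,0,0) (2,0,0) (-1,0,0) (Or.inr (Or.inl rfl)) (by decide) (by decide) (by decide))
  have t2 := t1.tail (mvP hB (2,0,0) (1,0,0) (-1,0,0) (Or.inr (Or.inl rfl)) (by decide) (by decide) (by decide))
  have t3 := t2.tail (mvP hB (1,0,0) (0,0,0) (-1,0,0) (Or.inr (Or.inl rfl)) (by decide) (by decide) (by decide))
  have t4 := t3.tail (mvP hB (0,0,0) (-1,0,0) (-1,0,0) (Or.inr (Or.inl rfl)) (by decide) (by decide) (by decide))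
  have t5 := t4.tail (mvP hB (-1,0,0) (-2,0,0) (-1,0,0) (Or.inr (Or.inl rfl)) (by decide) (by decide) (by decide))
  exact t5.tail (mvP hB (-2,0,0) (-3,0,0) (-1,0,0) (Or.inr (Or.inl rfl)) (by decide) (by decide) (by decide))

/-- reach every Q cell from the near entrance -/
lemma reachQL {B : Finset Cell3} (hB : B ⊆ corrP) :
    ∀ q ∈ corrQ,
      Relation.ReflTransGen (GStep3 (corrP ∪ corrQ)) ⟨B, (0,-3,0)⟩ ⟨B, q⟩ := by
  have dY : IsDir3 ((0,1,0) : Cell3) := Or.inr (Or.inr (Or.inl rfl))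
  have dZ : IsDir3 ((0,0,1) : Cell3) := Or.inr (Or.inr (Or.inr (Or.inr (Or.inl rfl))))
  have dZ' : IsDir3 ((0,0,-1) : Cell3) := Or.inr (Or.inr (Or.inr (Or.inr (Or.inr rfl))))
  have t0 : Relation.ReflTransGen (GStep3 (corrP ∪ corrQ)) ⟨B, (0,-3,0)⟩ ⟨B, (0,-3,0)⟩ :=
    .refl
  have t1 := t0.tail (mvQ hB (0,-3,0) (0,-2,0) (0,1,0) dY (by decide) (by decide) (by decide))
  have t2 := t1.tail (mvQ hB (0,-2,0) (0,-2,1) (0,0,1) dZ (by decide) (by decide) (by decide))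
  have t3 := t2.tail (mvQ hB (0,-2,1) (0,-2,2) (0,0,1) dZ (by decide) (by decide) (by decide))
  have t4 := t3.tail (mvQ hB (0,-2,2) (0,-1,2) (0,1,0) dY (by decide) (by decide) (by decide))
  have t5 := t4.tail (mvQ hB (0,-1,2) (0,0,2) (0,1,0) dY (by decide) (by decide) (by decide))
  have t6 := t5.tail (mvQ hB (0,0,2) (0,1,2) (0,1,0) dY (by decide) (by decide) (by decide))
  have t7 := t6.tail (mvQ hB (0,1,2) (0,2,2) (0,1,0) dY (by decide) (by decide) (by decide))
  have t8 := t7.tail (mvQ hB (0,2,2) (0,2,1) (0,0,-1) dZ' (by decide) (by decide) (by decide))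
  have t9 := t8.tail (mvQ hB (0,2,1) (0,2,0) (0,0,-1) dZ' (by decide) (by decide) (by decide))
  have t10 := t9.tail (mvQ hB (0,2,0) (0,3,0) (0,1,0) dY (by decide) (by decide) (by decide))
  intro q hq
  simp only [corrQ, Finset.mem_insert, Finset.mem_singleton] at hq
  rcases hq with h|h|h|h|h|h|h|h|h|h|h <;> subst h <;> assumption

/-- go from the far entrance of Q to the near one -/
lemma crossQR {B : Finset Cell3} (hB : B ⊆ corrP) :
    Relation.ReflTransGen (GStep3 (corrP ∪ corrQ)) ⟨B, (0,3,0)⟩ ⟨B, (0,-3,0)⟩ := by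
  have dY : IsDir3 ((0,-1,0) : Cell3) := Or.inr (Or.inr (Or.inr (Or.inl rfl)))
  have dZ : IsDir3 ((0,0,1) : Cell3) := Or.inr (Or.inr (Or.inr (Or.inr (Or.inl rfl))))
  have dZ' : IsDir3 ((0,0,-1) : Cell3) := Or.inr (Or.inr (Or.inr (Or.inr (Or.inr rfl))))
  have t0 : Relation.ReflTransGen (GStep3 (corrP ∪ corrQ)) ⟨B, (0,3,0)⟩ ⟨B, (0,3,0)⟩ :=
    .refl
  have t1 := t0.tail (mvQ hB (0,3,0) (0,2,0) (0,-1,0) dY (by decide) (by decide) (by decide))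
  have t2 := t1.tail (mvQ hB (0,2,0) (0,2,1) (0,0,1) dZ (by decide) (by decide) (by decide))
  have t3 := t2.tail (mvQ hB (0,2,1) (0,2,2) (0,0,1) dZ (by decide) (by decide) (by decide))
  have t4 := t3.tail (mvQ hB (0,2,2) (0,1,2) (0,-1,0) dY (by decide) (by decide) (by decide))
  have t5 := t4.tail (mvQ hB (0,1,2) (0,0,2) (0,-1,0) dY (by decide) (by decide) (by decide))
  have t6 := t5.tail (mvQ hB (0,0,2) (0,-1,2) (0,-1,0) dY (by decide) (by decide) (by decide))
  have t7 := t6.tail (mvQ hB (0,-1,2) (0,-2,2) (0,-1,0) dY (by decide) (by decide) (by decide))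
  have t8 := t7.tail (mvQ hB (0,-2,2) (0,-2,1) (0,0,-1) dZ' (by decide) (by decide) (by decide))
  have t9 := t8.tail (mvQ hB (0,-2,1) (0,-2,0) (0,0,-1) dZ' (by decide) (by decide) (by decide))
  exact t9.tail (mvQ hB (0,-2,0) (0,-3,0) (0,-1,0) dY (by decide) (by decide) (by decide))

/-- 3D crossover without leakage: with the free region `corrP ∪ corrQ`, a robot
entering from either end of one corridor can reach exactly the cells of that
corridor, and no block lying in the other corridor can ever be pushed. -/
theorem crossover_no_leakage :
    (∀ (B₀ : Finset Cell3) (r₀ : Cell3), B₀ ⊆ corrQ →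
      (r₀ = (-3, 0, 0) ∨ r₀ = (3, 0, 0)) →
      (∀ p ∈ corrP, ∃ s : St3,
        Relation.ReflTransGen (GStep3 (corrP ∪ corrQ)) ⟨B₀, r₀⟩ s ∧ s.r = p) ∧
      (∀ s : St3, Relation.ReflTransGen (GStep3 (corrP ∪ corrQ)) ⟨B₀, r₀⟩ s →
        s.r ∈ corrP ∧ s.B = B₀)) ∧
    (∀ (B₀ : Finset Cell3) (r₀ : Cell3), B₀ ⊆ corrP →
      (r₀ = (0, -3, 0) ∨ r₀ = (0, 3, 0)) →
      (∀ q ∈ corrQ, ∃ s : St3,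
        Relation.ReflTransGen (GStep3 (corrP ∪ corrQ)) ⟨B₀, r₀⟩ s ∧ s.r = q) ∧
      (∀ s : St3, Relation.ReflTransGen (GStep3 (corrP ∪ corrQ)) ⟨B₀, r₀⟩ s →
        s.r ∈ corrQ ∧ s.B = B₀)) := by
  constructor
  · intro B₀ r₀ hB hr₀
    constructor
    · intro p hp
      refine ⟨⟨B₀, p⟩, ?_, rfl⟩
      rcases hr₀ with h | h <;> subst h
      · exact reachPL hB p hp
      · exact (crossPR hB).trans (reachPL hB p hp)
    · intro s hs
      have h0 : (⟨B₀, r₀⟩ : St3).r ∈ corrP ∧ (⟨B₀, r₀⟩ : St3).B = B₀ := by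
        refine ⟨?_, rfl⟩
        rcases hr₀ with h | h <;> subst h
        · exact (by decide : ((-3,0,0) : Cell3) ∈ corrP)
        · exact (by decide : ((3,0,0) : Cell3) ∈ corrP)
      induction hs with
      | refl => exact h0
      | tail _ hstep ih => exact stepInvP hB hstep ih.1 ih.2
  · intro B₀ r₀ hB hr₀
    constructor
    · intro q hq
      refine ⟨⟨B₀, q⟩, ?_, rfl⟩
      rcases hr₀ with h | h <;> subst h
      · exact reachQL hB q hq
      · exact (crossQR hB).trans (reachQL hB q hq)
    · intro s hs
      have h0 : (⟨B₀, r₀⟩ : St3).r ∈ corrQ ∧ (⟨B₀, r₀⟩ : St3).B = B₀ := by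
        refine ⟨?_, rfl⟩
        rcases hr₀ with h | h <;> subst h
        · exact (by decide : ((0,-3,0) : Cell3) ∈ corrQ)
        · exact (by decide : ((0,3,0) : Cell3) ∈ corrQ)
      induction hs with
      | refl => exact h0
      | tail _ hstep ih => exact stepInvQ hB hstep ih.1 ih.2
end
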